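/- arXiv:2210.13306 — 2 statements merged into one kernel-verified Lean document; each statement's English description precedes it below -/
import Mathlib

section
/- Every AM-space that is locally almost square is positively locally almost square: if for every y in the unit sphere and ε > 0 there exists x in the unit sphere with ‖y ± x‖ ≤ 1 + ε, then for every y in the unit sphere and ε > 0 there exists a positive x in the unit sphere with ‖y ± x‖ ≤ 1 + ε. -/
/-! Replace an LASQ witness `x` by `|x|`: since `y + |x| = (y + x) ⊔ (y - x)` and
`y - |x| = (y - x) ⊓ (y + x)`, both `|y ± |x||` are dominated by `|y + x| ⊔ |y - x|`,
whose norm in an AM-space is `max ‖y + x‖ ‖y - x‖`. -/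

section LatticeOrderedGroup

variable {α : Type*} [AddCommGroup α] [Lattice α] [IsOrderedAddMonoid α]

lemma abs_sup_le_sup_abs (a b : α) : |a ⊔ b| ≤ |a| ⊔ |b| := by
  refine abs_le'.2 ⟨sup_le_sup (le_abs_self a) (le_abs_self b), ?_⟩
  rw [neg_sup]
  exact inf_le_left.trans ((neg_le_abs a).trans le_sup_left)

lemma abs_inf_le_sup_abs (a b : α) : |a ⊓ b| ≤ |a| ⊔ |b| := by
  refine abs_le'.2 ⟨inf_le_left.trans ((le_abs_self a).trans le_sup_left), ?_⟩
  rw [neg_inf]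
  exact sup_le_sup (neg_le_abs a) (neg_le_abs b)

lemma add_abs_eq_sup (y x : α) : y + |x| = (y + x) ⊔ (y - x) := by
  rw [abs, add_sup, sub_eq_add_neg]

lemma sub_abs_eq_inf (y x : α) : y - |x| = (y - x) ⊓ (y + x) := by
  rw [abs, sub_sup, sub_neg_eq_add]

end LatticeOrderedGroup

section AMSpace

variable {X : Type*} [NormedAddCommGroup X] [Lattice X] [HasSolidNorm X] [IsOrderedAddMonoid X]

lemma norm_le_max_of_abs_le_sup_abs
    (hAM : ∀ a b : X, 0 ≤ a → 0 ≤ b → ‖a ⊔ b‖ = max ‖a‖ ‖b‖) {a b c : X}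
    (h : |c| ≤ |a| ⊔ |b|) : ‖c‖ ≤ max ‖a‖ ‖b‖ := by
  have hsup : ‖|a| ⊔ |b|‖ = max ‖a‖ ‖b‖ := by
    rw [hAM _ _ (abs_nonneg a) (abs_nonneg b), norm_abs_eq_norm, norm_abs_eq_norm]
  rw [← hsup]
  have hsup_nonneg : 0 ≤ |a| ⊔ |b| := le_sup_of_le_left (abs_nonneg a)
  exact norm_le_norm_of_abs_le_abs (h.trans_eq (abs_of_nonneg hsup_nonneg).symm)

variable (hAM : ∀ a b : X, 0 ≤ a → 0 ≤ b → ‖a ⊔ b‖ = max ‖a‖ ‖b‖)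
include hAM

lemma norm_add_abs_le_max (y x : X) : ‖y + |x|‖ ≤ max ‖y + x‖ ‖y - x‖ :=
  norm_le_max_of_abs_le_sup_abs hAM (add_abs_eq_sup y x ▸ abs_sup_le_sup_abs _ _)

lemma norm_sub_abs_le_max (y x : X) : ‖y - |x|‖ ≤ max ‖y + x‖ ‖y - x‖ := by
  rw [max_comm]
  exact norm_le_max_of_abs_le_sup_abs hAM (sub_abs_eq_inf y x ▸ abs_inf_le_sup_abs _ _)

end AMSpace

theorem stmt2_general {X : Type*} [NormedAddCommGroup X] [Lattice X] [HasSolidNorm X] [IsOrderedAddMonoid X]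
    (hAM : ∀ a b : X, 0 ≤ a → 0 ≤ b → ‖a ⊔ b‖ = max ‖a‖ ‖b‖)
    (hLASQ : ∀ y : X, ‖y‖ = 1 → ∀ ε : ℝ, 0 < ε →
      ∃ x : X, ‖x‖ = 1 ∧ ‖y + x‖ ≤ 1 + ε ∧ ‖y - x‖ ≤ 1 + ε) :
    ∀ y : X, ‖y‖ = 1 → ∀ ε : ℝ, 0 < ε →
      ∃ x : X, 0 ≤ x ∧ ‖x‖ = 1 ∧ ‖y + x‖ ≤ 1 + ε ∧ ‖y - x‖ ≤ 1 + ε := by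
  intro y hy ε hε
  obtain ⟨x, hx, hadd, hsub⟩ := hLASQ y hy ε hε
  have hmax : max ‖y + x‖ ‖y - x‖ ≤ 1 + ε := max_le hadd hsub
  exact ⟨|x|, abs_nonneg x, by rwa [norm_abs_eq_norm],
    (norm_add_abs_le_max hAM y x).trans hmax, (norm_sub_abs_le_max hAM y x).trans hmax⟩

theorem stmt2 {X : Type*} [NormedAddCommGroup X] [Lattice X] [HasSolidNorm X] [IsOrderedAddMonoid X] [NormedSpace ℝ X] [CompleteSpace X]
    (hAM : ∀ a b : X, 0 ≤ a → 0 ≤ b → ‖a ⊔ b‖ = max ‖a‖ ‖b‖)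
    (hLASQ : ∀ y : X, ‖y‖ = 1 → ∀ ε : ℝ, 0 < ε →
      ∃ x : X, ‖x‖ = 1 ∧ ‖y + x‖ ≤ 1 + ε ∧ ‖y - x‖ ≤ 1 + ε) :
    ∀ y : X, ‖y‖ = 1 → ∀ ε : ℝ, 0 < ε →
      ∃ x : X, 0 ≤ x ∧ ‖x‖ = 1 ∧ ‖y + x‖ ≤ 1 + ε ∧ ‖y - x‖ ≤ 1 + ε :=
  stmt2_general hAM hLASQ
end

section
/- Let X be a Banach lattice whose dual X* is separable. If X is positively locally almost square, then X is weakly almost square: for every y with ‖y‖ = 1 there exists a sequence (x_n) in X converging weakly to 0 with lim ‖x_n‖ = 1, lim ‖y + x_n‖ = 1 and lim ‖y − x_n‖ = 1. -/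
/-!
Iterating LASQ+ from `|y|`, each time at the normalised current vector, produces positive unit
vectors `v₀, …, v_{N-1}` with `‖|y| + ∑ vᵢ‖ ≤ (1 + ε)ᴺ`, which is at most `1 + δ` for small `ε`.
Since the `vᵢ` are positive, every partial sum of them then has norm at most `1 + δ`, so
`∑ᵢ |f vᵢ| ≤ 2 (1 + δ) ‖f‖` for every functional `f`, independently of `N`. For large `N` some `vᵢ`
is therefore almost annihilated by finitely many prescribed functionals, while
`|y ± vᵢ| ≤ |y| + ∑ vⱼ` keeps `‖y ± vᵢ‖ ≤ 1 + δ`. Doing this along a dense sequence in the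
separable dual gives a weakly null sequence.
-/

open Filter Topology Finset
open scoped NNReal

lemma nonneg_of_two_pow_nsmul_nonneg {α : Type*} [Lattice α] [AddCommGroup α]
    [IsOrderedAddMonoid α] {a : α} (n : ℕ) (h : 0 ≤ 2 ^ n • a) : 0 ≤ a := by
  induction n generalizing a with
  | zero => simpa using h
  | succ n ih => exact nsmul_two_semiclosed (ih (by rwa [pow_succ', mul_nsmul] at h))

section SolidNorm

variable {X : Type*} [NormedAddCommGroup X] [Lattice X] [IsOrderedAddMonoid X] [HasSolidNorm X]

lemma norm_le_norm_of_nonneg_of_le {a b : X} (ha : 0 ≤ a) (hab : a ≤ b) : ‖a‖ ≤ ‖b‖ :=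
  norm_le_norm_of_abs_le_abs <| by rwa [abs_of_nonneg ha, abs_of_nonneg (ha.trans hab)]

variable [NormedSpace ℝ X]

/-- The order need not be compatible with scalar multiplication a priori; it follows from the
closedness of the positive cone, approximating `t` by dyadic rationals `⌊2ⁿ t⌋₊ / 2ⁿ`. -/
lemma real_smul_nonneg {x : X} (hx : 0 ≤ x) {t : ℝ} (ht : 0 ≤ t) : 0 ≤ t • x := by
  set q : ℕ → ℝ := fun n => (⌊t * 2 ^ n⌋₊ : ℝ) / 2 ^ n
  have hq : ∀ n, 0 ≤ q n • x := fun n => nonneg_of_two_pow_nsmul_nonneg n <| by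
    rw [← Nat.cast_smul_eq_nsmul ℝ, smul_smul, Nat.cast_pow, Nat.cast_ofNat,
      mul_div_cancel₀ _ (by positivity), Nat.cast_smul_eq_nsmul]
    exact nsmul_nonneg hx _
  have hlim : Tendsto (fun n => q n • x) atTop (𝓝 (t • x)) :=
    ((tendsto_nat_floor_mul_div_atTop ht).comp
      (tendsto_pow_atTop_atTop_of_one_lt one_lt_two)).smul_const x
  exact isClosed_nonneg.mem_of_tendsto hlim (Eventually.of_forall hq)

lemma le_smul_self_of_one_le {x : X} (hx : 0 ≤ x) {c : ℝ} (hc : 1 ≤ c) : x ≤ c • x := by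
  simpa [sub_smul] using real_smul_nonneg hx (sub_nonneg.2 hc)

end SolidNorm

lemma sum_abs_apply_le {X ι : Type*} [NormedAddCommGroup X] [Lattice X] [IsOrderedAddMonoid X]
    [HasSolidNorm X] [NormedSpace ℝ X] (φ : X →L[ℝ] ℝ) (s : Finset ι) {v : ι → X}
    (hv : ∀ i ∈ s, 0 ≤ v i) : ∑ i ∈ s, |φ (v i)| ≤ 2 * ‖φ‖ * ‖∑ i ∈ s, v i‖ := by
  have hpart : ∀ t ⊆ s, |φ (∑ i ∈ t, v i)| ≤ ‖φ‖ * ‖∑ i ∈ s, v i‖ := fun t hts =>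
    (φ.le_opNorm _).trans <| mul_le_mul_of_nonneg_left
      (norm_le_norm_of_nonneg_of_le (sum_nonneg fun i hi => hv i (hts hi))
        (sum_le_sum_of_subset_of_nonneg hts fun i hi _ => hv i hi)) (norm_nonneg φ)
  set P : ι → Prop := fun i => 0 ≤ φ (v i)
  have hpos : ∑ i ∈ s.filter P, |φ (v i)| = φ (∑ i ∈ s.filter P, v i) := by
    rw [map_sum]
    exact sum_congr rfl fun i hi => abs_of_nonneg (mem_filter.1 hi).2
  have hneg : ∑ i ∈ s.filter (¬ P ·), |φ (v i)| = -φ (∑ i ∈ s.filter (¬ P ·), v i) := by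
    rw [map_sum, ← sum_neg_distrib]
    exact sum_congr rfl fun i hi => abs_of_neg (not_le.1 (mem_filter.1 hi).2)
  rw [← sum_filter_add_sum_filter_not s P, hpos, hneg]
  linarith [le_abs_self (φ (∑ i ∈ s.filter P, v i)), neg_le_abs (φ (∑ i ∈ s.filter (¬ P ·), v i)),
    hpart _ (filter_subset P s), hpart _ (filter_subset (¬ P ·) s)]

lemma exists_pos_one_add_pow_le (N : ℕ) {δ : ℝ} (hδ : 0 < δ) : ∃ ε > 0, (1 + ε) ^ N ≤ 1 + δ := by
  have hsmall : ∀ᶠ ε in 𝓝 (0 : ℝ), (1 + ε) ^ N < 1 + δ :=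
    (by fun_prop : Continuous fun ε : ℝ => (1 + ε) ^ N).continuousAt.eventually_lt
      continuousAt_const (by simpa using hδ)
  obtain ⟨ε, hε, hpos⟩ :=
    ((hsmall.filter_mono nhdsWithin_le_nhds).and (self_mem_nhdsWithin (s := Set.Ioi 0))).exists
  exact ⟨ε, hpos, hε.le⟩

lemma tendsto_apply_of_dense {𝕜 E F ι : Type*} [NontriviallyNormedField 𝕜]
    [SeminormedAddCommGroup E] [NormedSpace 𝕜 E] [SeminormedAddCommGroup F] [NormedSpace 𝕜 F]
    {l : Filter ι} {x : ι → E} (C : ℝ≥0) (hx : ∀ i, ‖x i‖₊ ≤ C) {D : Set (E →L[𝕜] F)}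
    (hD : Dense D) (hDx : ∀ φ ∈ D, Tendsto (fun i => φ (x i)) l (𝓝 0)) (φ : E →L[𝕜] F) :
    Tendsto (fun i => φ (x i)) l (𝓝 0) := by
  have hequi : Equicontinuous fun i (ψ : E →L[𝕜] F) => ψ (x i) :=
    (LipschitzWith.uniformEquicontinuous _ C fun i =>
      LipschitzWith.of_dist_le_mul fun ψ ψ' => by
        rw [dist_eq_norm, dist_eq_norm, ← sub_apply, mul_comm]
        exact ((ψ - ψ').le_opNorm _).trans
          (mul_le_mul_of_nonneg_left (hx i) (norm_nonneg _))).equicontinuous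
  have hclosed := hequi.isClosed_setOfPred_tendsto (l := l) continuous_const (f := fun _ => (0 : F))
  exact hclosed.closure_subset_iff.2 hDx (hD φ)

def PositivelyLocallyAlmostSquare (X : Type*) [NormedAddCommGroup X] [Lattice X] : Prop :=
  ∀ y : X, ‖y‖ = 1 → ∀ ε : ℝ, 0 < ε → ∃ x : X, 0 ≤ x ∧ ‖x‖ = 1 ∧ ‖y + x‖ ≤ 1 + ε ∧ ‖y - x‖ ≤ 1 + ε

namespace PositivelyLocallyAlmostSquare

variable {X : Type*} [NormedAddCommGroup X] [Lattice X] [IsOrderedAddMonoid X] [HasSolidNorm X]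
  [NormedSpace ℝ X]

/-- Applying the definition to `‖u‖⁻¹ • u` gives `‖u + ‖u‖ • v‖ ≤ (1 + ε) ‖u‖`, and
`u + v ≤ u + ‖u‖ • v` because `‖u‖ ≥ 1`. -/
lemma exists_norm_add_le (hX : PositivelyLocallyAlmostSquare X) {u : X} (hu : 0 ≤ u)
    (hu_norm : 1 ≤ ‖u‖) {ε : ℝ} (hε : 0 < ε) :
    ∃ v : X, 0 ≤ v ∧ ‖v‖ = 1 ∧ ‖u + v‖ ≤ (1 + ε) * ‖u‖ := by
  have hu_pos : 0 < ‖u‖ := by linarith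
  obtain ⟨v, hv, hv_norm, hv_add, -⟩ :=
    hX (‖u‖⁻¹ • u) (by rw [norm_smul, norm_inv, norm_norm, inv_mul_cancel₀ hu_pos.ne']) ε hε
  refine ⟨v, hv, hv_norm, ?_⟩
  have hscale : u + ‖u‖ • v = ‖u‖ • (‖u‖⁻¹ • u + v) := by
    rw [smul_add, smul_inv_smul₀ hu_pos.ne']
  calc ‖u + v‖ ≤ ‖u + ‖u‖ • v‖ :=
        norm_le_norm_of_nonneg_of_le (add_nonneg hu hv)
          (add_le_add_right (le_smul_self_of_one_le hv hu_norm) u)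
    _ = ‖u‖ * ‖‖u‖⁻¹ • u + v‖ := by rw [hscale, norm_smul, norm_norm]
    _ ≤ ‖u‖ * (1 + ε) := mul_le_mul_of_nonneg_left hv_add hu_pos.le
    _ = (1 + ε) * ‖u‖ := mul_comm _ _

lemma exists_seq_norm_add_sum_le (hX : PositivelyLocallyAlmostSquare X) {u₀ : X} (hu₀ : 0 ≤ u₀)
    (hu₀_norm : 1 ≤ ‖u₀‖) {ε : ℝ} (hε : 0 < ε) : ∃ v : ℕ → X, (∀ n, 0 ≤ v n) ∧ (∀ n, ‖v n‖ = 1) ∧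
      ∀ n, ‖u₀ + ∑ i ∈ range n, v i‖ ≤ (1 + ε) ^ n * ‖u₀‖ := by
  have hstep : ∀ u : X, u₀ ≤ u → ∃ v : X, 0 ≤ v ∧ ‖v‖ = 1 ∧ ‖u + v‖ ≤ (1 + ε) * ‖u‖ :=
    fun u hu => hX.exists_norm_add_le (hu₀.trans hu)
      (hu₀_norm.trans (norm_le_norm_of_nonneg_of_le hu₀ hu)) hε
  choose! V hV hV_norm hV_add using hstep
  set u : ℕ → X := fun n => Nat.rec u₀ (fun _ w => w + V w) n
  have hu_ge : ∀ n, u₀ ≤ u n := by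
    intro n
    induction n with
    | zero => exact le_rfl
    | succ n ih => exact ih.trans (le_add_of_nonneg_right (hV _ ih))
  have hu_sum : ∀ n, u n = u₀ + ∑ i ∈ range n, V (u i) := by
    intro n
    induction n with
    | zero => simp [u]
    | succ n ih => rw [sum_range_succ, ← add_assoc, ← ih]
  refine ⟨fun n => V (u n), fun n => hV _ (hu_ge n), fun n => hV_norm _ (hu_ge n), fun n => ?_⟩
  rw [← hu_sum]
  induction n with
  | zero => simp [u]
  | succ n ih =>
    calc ‖u (n + 1)‖ ≤ (1 + ε) * ‖u n‖ := hV_add _ (hu_ge n)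
      _ ≤ (1 + ε) * ((1 + ε) ^ n * ‖u₀‖) := by gcongr
      _ = (1 + ε) ^ (n + 1) * ‖u₀‖ := by ring

lemma exists_almost_square_of_finset (hX : PositivelyLocallyAlmostSquare X) {y : X} (hy : ‖y‖ = 1)
    (K : Finset (X →L[ℝ] ℝ)) {δ : ℝ} (hδ : 0 < δ) :
    ∃ x : X, ‖x‖ = 1 ∧ ‖y + x‖ ≤ 1 + δ ∧ ‖y - x‖ ≤ 1 + δ ∧ ∀ f ∈ K, |f x| ≤ δ := by
  set C := ∑ f ∈ K, 2 * ‖f‖ * (1 + δ)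
  obtain ⟨N, hN⟩ := exists_nat_gt (C / δ)
  have hN_pos : (0 : ℝ) < N := lt_of_le_of_lt (by positivity) hN
  obtain ⟨ε, hε, hεN⟩ := exists_pos_one_add_pow_le N hδ
  obtain ⟨v, hv, hv_norm, hv_sum⟩ :=
    hX.exists_seq_norm_add_sum_le (abs_nonneg y) (by rw [norm_abs_eq_norm, hy]) hε
  set s := range N
  have hs : s.Nonempty := nonempty_range_iff.2 (by exact_mod_cast hN_pos.ne')
  have hbound : ∀ z : X, |z| ≤ |y| + ∑ i ∈ s, v i → ‖z‖ ≤ 1 + δ := fun z hz => by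
    have := (norm_le_norm_of_nonneg_of_le (abs_nonneg z) hz).trans (hv_sum N)
    rw [norm_abs_eq_norm, norm_abs_eq_norm, hy, mul_one] at this
    linarith
  have hsum_norm : ‖∑ i ∈ s, v i‖ ≤ 1 + δ := hbound _ <| by
    rw [abs_of_nonneg (sum_nonneg fun i _ => hv i)]
    exact le_add_of_nonneg_left (abs_nonneg y)
  have htotal : ∑ i ∈ s, ∑ f ∈ K, |f (v i)| ≤ ∑ _i ∈ s, C / N := by
    rw [sum_comm, sum_const, card_range, nsmul_eq_mul, mul_div_cancel₀ _ hN_pos.ne']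
    calc ∑ f ∈ K, ∑ i ∈ s, |f (v i)| ≤ ∑ f ∈ K, 2 * ‖f‖ * ‖∑ i ∈ s, v i‖ :=
          sum_le_sum fun f _ => sum_abs_apply_le f s fun i _ => hv i
      _ ≤ C := sum_le_sum fun f _ => by gcongr
  obtain ⟨i, hi, hgood⟩ := exists_le_of_sum_le hs htotal
  have hCN : C / N < δ := (div_lt_iff₀ hN_pos).2 (by linarith [(div_lt_iff₀ hδ).1 hN])
  have hyv : |y| + v i ≤ |y| + ∑ j ∈ s, v j :=
    add_le_add_right (single_le_sum (fun j _ => hv j) hi) _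
  refine ⟨v i, hv_norm i, hbound _ ?_, hbound _ ?_, fun f hf => ?_⟩
  · exact (abs_add_le y (v i)).trans (by rwa [abs_of_nonneg (hv i)])
  · rw [sub_eq_add_neg]
    exact (abs_add_le y (-v i)).trans (by rwa [abs_neg, abs_of_nonneg (hv i)])
  · exact ((single_le_sum (fun g _ => abs_nonneg (g (v i))) hf).trans hgood).trans hCN.le

end PositivelyLocallyAlmostSquare

lemma abs_norm_add_sub_one_le {E : Type*} [NormedAddCommGroup E] [NormedSpace ℝ E] {x y : E}
    {δ : ℝ} (hy : ‖y‖ = 1) (h_add : ‖y + x‖ ≤ 1 + δ) (h_sub : ‖y - x‖ ≤ 1 + δ) :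
    |‖y + x‖ - 1| ≤ δ ∧ |‖y - x‖ - 1| ≤ δ := by
  have htwo : 2 ≤ ‖y + x‖ + ‖y - x‖ := by
    calc (2 : ℝ) = ‖(2 : ℝ) • y‖ := by rw [norm_smul, hy, Real.norm_two, mul_one]
      _ = ‖(y + x) + (y - x)‖ := by rw [two_smul, add_add_sub_cancel]
      _ ≤ ‖y + x‖ + ‖y - x‖ := norm_add_le _ _
  constructor <;> rw [abs_sub_le_iff] <;> constructor <;> linarith

theorem stmt10_general {X : Type*} [NormedAddCommGroup X] [Lattice X] [IsOrderedAddMonoid X] [HasSolidNorm X]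
    [NormedSpace ℝ X]
    [TopologicalSpace.SeparableSpace (X →L[ℝ] ℝ)]
    (hLASQplus : ∀ y : X, ‖y‖ = 1 → ∀ ε : ℝ, 0 < ε →
      ∃ x : X, 0 ≤ x ∧ ‖x‖ = 1 ∧ ‖y + x‖ ≤ 1 + ε ∧ ‖y - x‖ ≤ 1 + ε) :
    ∀ y : X, ‖y‖ = 1 →
      ∃ x : ℕ → X,
        (∀ f : X →L[ℝ] ℝ, Filter.Tendsto (fun n => f (x n)) Filter.atTop (nhds 0)) ∧
        Filter.Tendsto (fun n => ‖x n‖) Filter.atTop (nhds 1) ∧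
        Filter.Tendsto (fun n => ‖y + x n‖) Filter.atTop (nhds 1) ∧
        Filter.Tendsto (fun n => ‖y - x n‖) Filter.atTop (nhds 1) := by
  classical
  intro y hy
  obtain ⟨g, hg⟩ := TopologicalSpace.exists_dense_seq (X →L[ℝ] ℝ)
  choose x hx_norm hx_add hx_sub hx_apply using fun m : ℕ =>
    PositivelyLocallyAlmostSquare.exists_almost_square_of_finset hLASQplus hy
      ((range (m + 1)).image g) (Nat.one_div_pos_of_nat (n := m))
  have hδ : Tendsto (fun m : ℕ => 1 / ((m : ℝ) + 1)) atTop (𝓝 0) :=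
    tendsto_one_div_add_atTop_nhds_zero_nat
  have hnorm := fun m => abs_norm_add_sub_one_le hy (hx_add m) (hx_sub m)
  refine ⟨x, ?_, by simp [hx_norm], ?_, ?_⟩
  · refine tendsto_apply_of_dense 1 (fun m => by simp [← NNReal.coe_le_coe, hx_norm]) hg ?_
    rintro _ ⟨k, rfl⟩
    refine squeeze_zero_norm' (eventually_atTop.2 ⟨k, fun m hkm => hx_apply m _ ?_⟩) hδ
    exact mem_image_of_mem g (mem_range.2 (Nat.lt_succ_of_le hkm))
  · exact tendsto_iff_norm_sub_tendsto_zero.2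
      (squeeze_zero (fun _ => norm_nonneg _) (fun m => (hnorm m).1) hδ)
  · exact tendsto_iff_norm_sub_tendsto_zero.2
      (squeeze_zero (fun _ => norm_nonneg _) (fun m => (hnorm m).2) hδ)

theorem stmt10 {X : Type*} [NormedAddCommGroup X] [Lattice X] [IsOrderedAddMonoid X] [HasSolidNorm X] [NormedSpace ℝ X] [CompleteSpace X]
    [TopologicalSpace.SeparableSpace (X →L[ℝ] ℝ)]
    (hLASQplus : ∀ y : X, ‖y‖ = 1 → ∀ ε : ℝ, 0 < ε →
      ∃ x : X, 0 ≤ x ∧ ‖x‖ = 1 ∧ ‖y + x‖ ≤ 1 + ε ∧ ‖y - x‖ ≤ 1 + ε) :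
    ∀ y : X, ‖y‖ = 1 →
      ∃ x : ℕ → X,
        (∀ f : X →L[ℝ] ℝ, Filter.Tendsto (fun n => f (x n)) Filter.atTop (nhds 0)) ∧
        Filter.Tendsto (fun n => ‖x n‖) Filter.atTop (nhds 1) ∧
        Filter.Tendsto (fun n => ‖y + x n‖) Filter.atTop (nhds 1) ∧
        Filter.Tendsto (fun n => ‖y - x n‖) Filter.atTop (nhds 1) :=
  stmt10_general hLASQplus
end
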